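/- Define a map f : (2²)^ω → (2²)^ω by f(α)(2n) = (first coordinate of α(n), 0) and f(α)(2n+1) = α(n). Then for any A, B ⊆ (2²)^ω: if A is narrowly below B then f''[A] is narrowly below f''[B], and if A is narrowly to the left of B then f''[A] is widely to the left of f''[B]. Consequently, the image under f of any up-m-comb is an up-m-comb and the image of any right-n-comb is a wide right-n-comb. -/
import Mathlib


/-- The index square `2²`. -/
abbrev Sq : Type := Fin 2 × Fin 2

/-- `α` extends the partial function `τ` (defined on `{s | s < t}`) followed by the
value `v` at `t`. -/
def ExtendsAt (α : ℕ → Sq) (t : ℕ) (τ : ℕ → Sq) (v : Sq) : Prop :=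
  (∀ s, s < t → α s = τ s) ∧ α t = v

/-- `A` is narrowly below `B`. -/
def NarrowlyBelow (A B : Set (ℕ → Sq)) : Prop :=
  ∃ (t : ℕ) (τ : ℕ → Sq) (i : Fin 2),
    (∀ α ∈ A, ExtendsAt α t τ (i, 0)) ∧ (∀ β ∈ B, ExtendsAt β t τ (i, 1))

/-- `A` is narrowly to the left of `B`. -/
def NarrowlyLeft (A B : Set (ℕ → Sq)) : Prop :=
  ∃ (t : ℕ) (τ : ℕ → Sq) (j : Fin 2),
    (∀ α ∈ A, ExtendsAt α t τ (0, j)) ∧ (∀ β ∈ B, ExtendsAt β t τ (1, j))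

/-- `A` is widely to the left of `B`. -/
def WidelyLeft (A B : Set (ℕ → Sq)) : Prop :=
  ∃ (t : ℕ) (τ : ℕ → Sq),
    (∀ α ∈ A ∪ B, ∀ s, s < t → α s = τ s) ∧
    (∀ α ∈ A, (α t).1 = 0) ∧ (∀ β ∈ B, (β t).1 = 1)

/-- Finite up-`m`-combs. -/
inductive FinUpComb (m : ℕ∞) : Set (ℕ → Sq) → Prop
  | single (α : ℕ → Sq) : FinUpComb m {α}
  | union {A B : Set (ℕ → Sq)} : FinUpComb m A → FinUpComb m B →
      (A.ncard : ℕ∞) ≤ m → NarrowlyBelow A B → FinUpComb m (A ∪ B)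

/-- Finite right-`n`-combs. -/
inductive FinRightComb (n : ℕ∞) : Set (ℕ → Sq) → Prop
  | single (α : ℕ → Sq) : FinRightComb n {α}
  | union {A B : Set (ℕ → Sq)} : FinRightComb n A → FinRightComb n B →
      (A.ncard : ℕ∞) ≤ n → NarrowlyLeft A B → FinRightComb n (A ∪ B)

/-- Finite wide right-`n`-combs. -/
inductive FinWideComb (n : ℕ∞) : Set (ℕ → Sq) → Prop
  | single (α : ℕ → Sq) : FinWideComb n {α}
  | union {A B : Set (ℕ → Sq)} : FinWideComb n A → FinWideComb n B →
      (A.ncard : ℕ∞) ≤ n → WidelyLeft A B → FinWideComb n (A ∪ B)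

/-- Up-`m`-combs: every non-empty finite subset is a finite up-`m`-comb. -/
def UpComb (m : ℕ∞) (C : Set (ℕ → Sq)) : Prop :=
  ∀ A ⊆ C, A.Finite → A.Nonempty → FinUpComb m A

/-- Right-`n`-combs. -/
def RightComb (n : ℕ∞) (C : Set (ℕ → Sq)) : Prop :=
  ∀ A ⊆ C, A.Finite → A.Nonempty → FinRightComb n A

/-- Wide right-`n`-combs. -/
def WideComb (n : ℕ∞) (C : Set (ℕ → Sq)) : Prop :=
  ∀ A ⊆ C, A.Finite → A.Nonempty → FinWideComb n A

/-- The doubling map `f` (with `f(α)(2n) = ((α n).1, 0)` and `f(α)(2n+1) = α n`)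
takes narrowly-below pairs to narrowly-below pairs, narrowly-left pairs to
widely-left pairs, up-`m`-combs to up-`m`-combs, and right-`n`-combs to wide
right-`n`-combs. -/
theorem stmt_15 (f : (ℕ → Sq) → (ℕ → Sq))
    (hf : ∀ (α : ℕ → Sq) (n : ℕ),
      f α (2 * n) = ((α n).1, 0) ∧ f α (2 * n + 1) = α n) :
    (∀ A B : Set (ℕ → Sq), NarrowlyBelow A B → NarrowlyBelow (f '' A) (f '' B)) ∧
    (∀ A B : Set (ℕ → Sq), NarrowlyLeft A B → WidelyLeft (f '' A) (f '' B)) ∧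
    (∀ (m : ℕ∞) (C : Set (ℕ → Sq)), UpComb m C → UpComb m (f '' C)) ∧
    (∀ (n : ℕ∞) (C : Set (ℕ → Sq)), RightComb n C → WideComb n (f '' C)) := by
  have hodd : ∀ α n, f α (2*n+1) = α n := fun α n => (hf α n).2
  have heven : ∀ α n, f α (2*n) = ((α n).1, 0) := fun α n => (hf α n).1
  have hinj : Function.Injective f := by
    intro α β h
    funext n
    have := congrFun h (2*n+1)
    rwa [hodd, hodd] at this
  have hdiv1 : ∀ k : ℕ, 2*k/2 = k := fun k => by omega
  have hdiv2 : ∀ k : ℕ, (2*k+1)/2 = k := fun k => by omega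
  have hnotev : ∀ k : ℕ, ¬ Even (2*k+1) := fun k => by
    simp [Nat.even_add_one, parity_simps]
  have hagree : ∀ (t : ℕ) (τ α : ℕ → Sq), (∀ s, s < t → α s = τ s) →
      ∀ s, s < 2*t → f α s =
        if Even s then ((τ (s/2)).1, 0) else τ (s/2) := by
    intro t τ α h1 s hs
    rcases Nat.even_or_odd s with ⟨k, rfl⟩ | ⟨k, rfl⟩
    · rw [show k+k = 2*k by ring] at hs ⊢
      rw [heven, if_pos (even_two_mul k), hdiv1, h1 k (by omega)]
    · rw [hodd, if_neg (hnotev k), hdiv2, h1 k (by omega)]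
  have hbelow : ∀ A B : Set (ℕ → Sq), NarrowlyBelow A B → NarrowlyBelow (f '' A) (f '' B) := by
    rintro A B ⟨t, τ, i, hA, hB⟩
    refine ⟨2*t+1, fun s => if s = 2*t then ((i : Fin 2), (0 : Fin 2)) else
        if Even s then ((τ (s/2)).1, 0) else τ (s/2), i, ?_, ?_⟩
    · rintro _ ⟨α, hα, rfl⟩
      obtain ⟨h1, h2⟩ := hA α hα
      refine ⟨fun s hs => ?_, by rw [hodd, h2]⟩
      beta_reduce
      by_cases hst : s = 2*t
      · subst hst
        rw [if_pos rfl, heven, h2]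
      · rw [if_neg hst, hagree t τ α h1 s (by omega)]
    · rintro _ ⟨α, hα, rfl⟩
      obtain ⟨h1, h2⟩ := hB α hα
      refine ⟨fun s hs => ?_, by rw [hodd, h2]⟩
      beta_reduce
      by_cases hst : s = 2*t
      · subst hst
        rw [if_pos rfl, heven, h2]
      · rw [if_neg hst, hagree t τ α h1 s (by omega)]
  have hleft : ∀ A B : Set (ℕ → Sq), NarrowlyLeft A B → WidelyLeft (f '' A) (f '' B) := by
    rintro A B ⟨t, τ, j, hA, hB⟩
    refine ⟨2*t, fun s => if Even s then ((τ (s/2)).1, 0) else τ (s/2), ?_, ?_, ?_⟩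
    · rintro _ (⟨α, hα, rfl⟩ | ⟨α, hα, rfl⟩) s hs
      · exact hagree t τ α (hA α hα).1 s hs
      · exact hagree t τ α (hB α hα).1 s hs
    · rintro _ ⟨α, hα, rfl⟩
      rw [heven, (hA α hα).2]
    · rintro _ ⟨α, hα, rfl⟩
      rw [heven, (hB α hα).2]
  have hup : ∀ (m : ℕ∞) (A : Set (ℕ → Sq)), FinUpComb m A → FinUpComb m (f '' A) := by
    intro m A h
    induction h with
    | single α => rw [Set.image_singleton]; exact FinUpComb.single _
    | union h1 h2 hc hb ih1 ih2 =>
      rw [Set.image_union]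
      exact FinUpComb.union ih1 ih2
        (by rwa [Set.ncard_image_of_injective _ hinj]) (hbelow _ _ hb)
  have hright : ∀ (n : ℕ∞) (A : Set (ℕ → Sq)), FinRightComb n A → FinWideComb n (f '' A) := by
    intro n A h
    induction h with
    | single α => rw [Set.image_singleton]; exact FinWideComb.single _
    | union h1 h2 hc hb ih1 ih2 =>
      rw [Set.image_union]
      exact FinWideComb.union ih1 ih2
        (by rwa [Set.ncard_image_of_injective _ hinj]) (hleft _ _ hb)
  have hsub : ∀ (C A : Set (ℕ → Sq)), A ⊆ f '' C → A.Finite → A.Nonempty →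
      ∃ A₀ : Set (ℕ → Sq), A₀ ⊆ C ∧ A₀.Finite ∧ A₀.Nonempty ∧ f '' A₀ = A := by
    intro C A hAC hfin hne
    refine ⟨f ⁻¹' A ∩ C, Set.inter_subset_right, ?_, ?_, ?_⟩
    · exact (hfin.preimage (hinj.injOn)).inter_of_left _
    · obtain ⟨a, ha⟩ := hne
      obtain ⟨c, hc, rfl⟩ := hAC ha
      exact ⟨c, ha, hc⟩
    · rw [Set.image_preimage_inter, Set.inter_eq_left.2 hAC]
  refine ⟨hbelow, hleft, ?_, ?_⟩
  · intro m C hC A hAC hfin hne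
    obtain ⟨A₀, h1, h2, h3, rfl⟩ := hsub C A hAC hfin hne
    exact hup m A₀ (hC A₀ h1 h2 h3)
  · intro n C hC A hAC hfin hne
    obtain ⟨A₀, h1, h2, h3, rfl⟩ := hsub C A hAC hfin hne
    exact hright n A₀ (hC A₀ h1 h2 h3)
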